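/- Let n, ℓ ∈ ℕ, let v ∈ ℤ with gcd(v, ℓ) = 1 and let v̄ be an inverse of v modulo ℓ. Let r1, r2, d ∈ ℂ with Re(r1) > 0, Re(r2) > 0 and Re(d) > 0. Then the function 𝓔(s) has a simple pole at s = 0, and lim_{s→0} s·𝓔(s) = −[Γ(d+1)/Γ(d + r1 + r2 + 1)]·(2π√n)^{r1+r2−1}·ℓ^{−r2}·ζ(1 − r1), where ζ is the Riemann zeta function. -/

import Mathlib

open Real Filter Topology HurwitzZeta

noncomputable section

/-- The Estermann zeta function `E(s; v/ℓ, a)`, defined as a meromorphic function of `s` via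
Hurwitz zeta functions. -/
def Est (a : ℂ) (ℓ : ℕ) (v : ℤ) (s : ℂ) : ℂ :=
  (ℓ : ℂ) ^ (a - 2 * s) *
    ∑ m1 ∈ Finset.Icc 1 ℓ, ∑ m2 ∈ Finset.Icc 1 ℓ,
      Complex.exp (2 * (π : ℂ) * Complex.I * v * m1 * m2 / ℓ) *
        hurwitzZeta (((m1 : ℝ) / (ℓ : ℝ) : ℝ) : UnitAddCircle) (s - a) *
        hurwitzZeta (((m2 : ℝ) / (ℓ : ℝ) : ℝ) : UnitAddCircle) s

/-- `𝓔(s) = [Γ(d−s+1)/Γ(d+s+r1+r2+1)]·(2π√n/ℓ)^{2s+r1+r2−1}·E(1−s−r1; −v̄/ℓ, −r1)`. -/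
def calE (n ℓ : ℕ) (vbar : ℤ) (r1 r2 d : ℂ) (s : ℂ) : ℂ :=
  Complex.Gamma (d - s + 1) / Complex.Gamma (d + s + r1 + r2 + 1) *
    ((2 * π * Real.sqrt n / (ℓ : ℝ) : ℝ) : ℂ) ^ (2 * s + r1 + r2 - 1) *
    Est (-r1) ℓ (-vbar) (1 - s - r1)

/-!
The Gamma ratio and the power of `2π√n/ℓ` are holomorphic and nonzero near `s = 0`, so the
residue comes from the Estermann factor `E(1 - s - r1; -v̄/ℓ, -r1)`. There only the Hurwitz
factor `ζ(1 - s, m1/ℓ)` has a pole at `s = 0`, with residue `-1` for every `m1`. Summing the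
additive character `m1 ↦ e(-v̄ m1 m2 / ℓ)` over `m1` then kills every `m2 ≠ ℓ`, since `v̄` is
invertible mod `ℓ`; the surviving term is `ℓ · ζ(1 - r1, 1) = ℓ · ζ(1 - r1)`.
-/

open Finset

theorem geom_sum_Icc_of_pow_eq_one {K : Type*} [Field K] [DecidableEq K] {z : K} {ℓ : ℕ}
    (hz : z ^ ℓ = 1) :
    ∑ m ∈ Icc 1 ℓ, z ^ m = if z = 1 then (ℓ : K) else 0 := by
  split_ifs with h
  · simp [h]
  · rw [← Ico_add_one_right_eq_Icc, sum_Ico_eq_sum_range, add_tsub_cancel_right]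
    simp only [pow_add, pow_one, ← mul_sum, geom_sum_eq h, hz, sub_self, zero_div, mul_zero]

theorem exp_two_pi_I_mul_div_eq_zpow (ℓ : ℕ) (c : ℤ) (m : ℕ) :
    Complex.exp (2 * π * Complex.I * c * m / ℓ) =
      (Complex.exp (2 * π * Complex.I / ℓ) ^ c) ^ m := by
  rw [← zpow_natCast, ← zpow_mul, ← Complex.exp_int_mul]
  congr 1
  push_cast
  ring

theorem sum_Icc_exp_two_pi_I_mul_div {ℓ : ℕ} (hℓ : ℓ ≠ 0) (c : ℤ) :
    ∑ m ∈ Icc 1 ℓ, Complex.exp (2 * π * Complex.I * c * m / ℓ) =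
      if (ℓ : ℤ) ∣ c then (ℓ : ℂ) else 0 := by
  have hζ := Complex.isPrimitiveRoot_exp ℓ hℓ
  have hpow : (Complex.exp (2 * π * Complex.I / ℓ) ^ c) ^ ℓ = 1 := by
    rw [← zpow_natCast, ← zpow_mul, mul_comm c, zpow_mul, zpow_natCast, hζ.pow_eq_one, one_zpow]
  simp only [exp_two_pi_I_mul_div_eq_zpow, geom_sum_Icc_of_pow_eq_one hpow,
    hζ.zpow_eq_one_iff_dvd]

theorem Int.dvd_mul_natCast_iff_eq_of_mem_Icc {ℓ m : ℕ} {b : ℤ} (hco : IsCoprime (ℓ : ℤ) b)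
    (hm : m ∈ Icc 1 ℓ) : (ℓ : ℤ) ∣ b * m ↔ m = ℓ := by
  rw [mem_Icc] at hm
  refine ⟨fun h => le_antisymm hm.2 (Nat.le_of_dvd hm.1 ?_), fun h => h ▸ dvd_mul_left _ _⟩
  exact_mod_cast hco.dvd_of_dvd_mul_left h

theorem sum_Icc_sum_Icc_exp_mul {ℓ : ℕ} (hℓ : 0 < ℓ) {b : ℤ} (hco : IsCoprime (ℓ : ℤ) b)
    (f : ℕ → ℂ) :
    ∑ m1 ∈ Icc 1 ℓ, ∑ m2 ∈ Icc 1 ℓ,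
      Complex.exp (2 * π * Complex.I * b * m1 * m2 / ℓ) * f m2 = ℓ * f ℓ := by
  have hcol : ∀ m2 ∈ Icc 1 ℓ, ∑ m1 ∈ Icc 1 ℓ, Complex.exp (2 * π * Complex.I * b * m1 * m2 / ℓ)
      = if m2 = ℓ then (ℓ : ℂ) else 0 := fun m2 hm2 => by
    rw [← if_congr (Int.dvd_mul_natCast_iff_eq_of_mem_Icc hco hm2) rfl rfl,
      ← sum_Icc_exp_two_pi_I_mul_div hℓ.ne']
    refine sum_congr rfl fun m1 _ => congrArg Complex.exp ?_
    push_cast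
    ring
  rw [sum_comm]
  simp_rw [← sum_mul]
  rw [sum_congr rfl fun m2 hm2 => congrArg (· * f m2) (hcol m2 hm2)]
  simp [hℓ.ne']

theorem tendsto_mul_hurwitzZeta_one_sub (a : UnitAddCircle) :
    Tendsto (fun s : ℂ => s * hurwitzZeta a (1 - s)) (𝓝[≠] 0) (𝓝 (-1)) := by
  have h : Tendsto (fun s : ℂ => 1 - s) (𝓝[≠] 0) (𝓝[≠] 1) := by
    have := (Filter.map_subLeft_nhdsNE (c := (1 : ℂ)) (a := 0)).le
    rwa [sub_zero] at this
  refine ((hurwitzZeta_residue_one a).comp h).neg.congr fun s => ?_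
  simp only [Function.comp_apply]
  ring

theorem Est_one_sub_add_eq {a : ℂ} {ℓ : ℕ} {b : ℤ} (s : ℂ) :
    s * Est a ℓ b (1 - s + a) = (ℓ : ℂ) ^ (-a - 2 + 2 * s) *
      ∑ m1 ∈ Icc 1 ℓ, ∑ m2 ∈ Icc 1 ℓ, Complex.exp (2 * π * Complex.I * b * m1 * m2 / ℓ) *
        (s * hurwitzZeta (((m1 : ℝ) / ℓ : ℝ) : UnitAddCircle) (1 - s)) *
        hurwitzZeta (((m2 : ℝ) / ℓ : ℝ) : UnitAddCircle) (1 - s + a) := by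
  rw [Est, show a - 2 * (1 - s + a) = -a - 2 + 2 * s by ring, add_sub_cancel_right]
  simp only [mul_sum]
  exact sum_congr rfl fun _ _ => sum_congr rfl fun _ _ => by ring

theorem tendsto_mul_Est_one_sub_add {ℓ : ℕ} (hℓ : 0 < ℓ) {b : ℤ} (hco : IsCoprime (ℓ : ℤ) b)
    {a : ℂ} (ha : a ≠ 0) :
    Tendsto (fun s : ℂ => s * Est a ℓ b (1 - s + a)) (𝓝[≠] 0)
      (𝓝 (-(ℓ : ℂ) ^ (-a - 1) * riemannZeta (1 + a))) := by
  have hℓ0 : (ℓ : ℂ) ≠ 0 := by exact_mod_cast hℓ.ne'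
  have hpow : Tendsto (fun s : ℂ => (ℓ : ℂ) ^ (-a - 2 + 2 * s)) (𝓝[≠] 0)
      (𝓝 ((ℓ : ℂ) ^ (-a - 2))) :=
    tendsto_nhdsWithin_of_tendsto_nhds <| (continuousAt_const_cpow hℓ0).tendsto.comp <|
      (by fun_prop : Continuous fun s : ℂ => -a - 2 + 2 * s).tendsto' 0 _ (by ring)
  have hterm (m1 m2 : ℕ) : Tendsto (fun s : ℂ => Complex.exp (2 * π * Complex.I * b * m1 * m2 / ℓ) *
      (s * hurwitzZeta (((m1 : ℝ) / ℓ : ℝ) : UnitAddCircle) (1 - s)) *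
      hurwitzZeta (((m2 : ℝ) / ℓ : ℝ) : UnitAddCircle) (1 - s + a)) (𝓝[≠] 0)
      (𝓝 (Complex.exp (2 * π * Complex.I * b * m1 * m2 / ℓ) * (-1) *
        hurwitzZeta (((m2 : ℝ) / ℓ : ℝ) : UnitAddCircle) (1 + a))) :=
    (tendsto_const_nhds.mul (tendsto_mul_hurwitzZeta_one_sub _)).mul <|
      tendsto_nhdsWithin_of_tendsto_nhds <|
        (differentiableAt_hurwitzZeta _ (by simpa using ha)).continuousAt.tendsto.comp <|
          (by fun_prop : Continuous fun s : ℂ => 1 - s + a).tendsto' 0 _ (by ring)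
  have hcoe_one : ((((ℓ : ℝ) / ℓ : ℝ)) : UnitAddCircle) = 0 := by
    rw [div_self (by exact_mod_cast hℓ.ne')]
    exact AddCircle.coe_period 1
  have hsum := tendsto_finsetSum (Icc 1 ℓ) fun m1 _ =>
    tendsto_finsetSum (Icc 1 ℓ) fun m2 _ => hterm m1 m2
  simp only [mul_neg_one, neg_mul, ← mul_neg, sum_Icc_sum_Icc_exp_mul hℓ hco, hcoe_one,
    hurwitzZeta_zero] at hsum
  simp only [Est_one_sub_add_eq]
  convert hpow.mul hsum using 2
  rw [show -a - 1 = -a - 2 + 1 by ring, Complex.cpow_add _ _ hℓ0, Complex.cpow_one]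
  ring

theorem Complex.continuousAt_Gamma_of_re_pos {s : ℂ} (hs : 0 < s.re) :
    ContinuousAt Complex.Gamma s :=
  Complex.continuousAt_Gamma s fun m h => by
    have := congrArg Complex.re h
    simp only [Complex.neg_re, Complex.natCast_re] at this
    linarith [m.cast_nonneg (α := ℝ)]

theorem continuousAt_Gamma_div_Gamma_mul_cpow {d r1 r2 : ℂ} (hd : 0 < (d + 1).re)
    (hdr : 0 < (d + r1 + r2 + 1).re) {c : ℂ} (hc : c ≠ 0) :
    ContinuousAt (fun s : ℂ => Complex.Gamma (d - s + 1) / Complex.Gamma (d + s + r1 + r2 + 1) *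
      c ^ (2 * s + r1 + r2 - 1)) 0 := by
  refine ContinuousAt.mul (ContinuousAt.div ?_ ?_ ?_) ?_
  · exact (Complex.continuousAt_Gamma_of_re_pos hd).comp_of_eq (by fun_prop) (by ring)
  · exact (Complex.continuousAt_Gamma_of_re_pos hdr).comp_of_eq (by fun_prop) (by ring)
  · simpa using Complex.Gamma_ne_zero_of_re_pos hdr
  · exact (continuousAt_const_cpow hc).comp (by fun_prop)

theorem calE_residue_at_zero_general
    (n ℓ : ℕ) (hn : 0 < n) (hℓ : 0 < ℓ)
    (v : ℤ) (vbar : ℤ) (hvbar : v * vbar ≡ 1 [ZMOD (ℓ : ℤ)])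
    (r1 r2 d : ℂ) (hr1 : 0 < r1.re) (hr2 : 0 < r2.re) (hd : 0 < d.re) :
    Tendsto (fun s : ℂ => s * calE n ℓ vbar r1 r2 d s) (𝓝[≠] 0)
      (𝓝 (-(Complex.Gamma (d + 1) / Complex.Gamma (d + r1 + r2 + 1)) *
        ((2 * π * Real.sqrt n : ℝ) : ℂ) ^ (r1 + r2 - 1) * (ℓ : ℂ) ^ (-r2) *
        riemannZeta (1 - r1))) := by
  have hco : IsCoprime (ℓ : ℤ) (-vbar) := by
    obtain ⟨k, hk⟩ := hvbar.dvd
    exact ⟨k, -v, by linarith⟩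
  have hr1' : r1 ≠ 0 := by
    rintro rfl
    simp at hr1
  have hEst := tendsto_mul_Est_one_sub_add hℓ hco (neg_ne_zero.2 hr1')
  simp only [← sub_eq_add_neg, neg_neg] at hEst
  have hpre := continuousAt_Gamma_div_Gamma_mul_cpow (r1 := r1) (r2 := r2)
    (by simp; linarith) (by simp; linarith)
    (c := ((2 * π * Real.sqrt n / ℓ : ℝ) : ℂ)) (by simp [Real.pi_ne_zero, hn.ne', hℓ.ne'])
  convert (hpre.tendsto.mono_left nhdsWithin_le_nhds).mul hEst using 1
  · funext s
    simp only [calE]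
    ring
  · congr 1
    rw [show -r2 = (r1 - 1) - (r1 + r2 - 1) by ring,
      Complex.cpow_sub (r1 - 1) _ (by exact_mod_cast hℓ.ne'), Complex.ofReal_div,
      Complex.div_cpow_ofReal_nonneg (by positivity) (by positivity), Complex.ofReal_natCast]
    simp only [mul_zero, zero_add, sub_zero, add_zero]
    ring

/-- Residue of `𝓔` at the simple pole `s = 0`. -/
theorem calE_residue_at_zero
    (n ℓ : ℕ) (hn : 0 < n) (hℓ : 0 < ℓ)
    (v : ℤ) (hv : Int.gcd v ℓ = 1) (vbar : ℤ) (hvbar : v * vbar ≡ 1 [ZMOD (ℓ : ℤ)])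
    (r1 r2 d : ℂ) (hr1 : 0 < r1.re) (hr2 : 0 < r2.re) (hd : 0 < d.re) :
    Tendsto (fun s : ℂ => s * calE n ℓ vbar r1 r2 d s) (𝓝[≠] 0)
      (𝓝 (-(Complex.Gamma (d + 1) / Complex.Gamma (d + r1 + r2 + 1)) *
        ((2 * π * Real.sqrt n : ℝ) : ℂ) ^ (r1 + r2 - 1) * (ℓ : ℂ) ^ (-r2) *
        riemannZeta (1 - r1))) :=
  calE_residue_at_zero_general n ℓ hn hℓ v vbar hvbar r1 r2 d hr1 hr2 hd

end
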